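/- The matrix [c₀+sc₁ | C₀+sC₁] formed from the last d−1 rows of the reduced barycentric linearization — first column (0,…,0, ξ_{d−1}(σ_d−s))ᵀ, and remaining columns the (d−1)×(d−1) matrix whose rows 1..d−2 are the bidiagonal rows with entries ξ_{k+1}(s−σ_k) and ξ_k(σ_{k+1}−s), and whose last row is (ξ_{d−1}(s−σ_d),…,ξ_{d−1}(s−σ_d), ξ_{d−1}(s−σ_d)+ξ_d(s−σ_{d−1})) — has full row rank d−1 for every s ∈ ℂ. -/

import Mathlib

open Matrix Finset

/-- Key kernel computation for the reduced barycentric linearization. -/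
lemma rb_aux_key (m : ℕ) (σ ξ : ℕ → ℂ)
    (hσ : ∀ i j, 1 ≤ i → i ≤ m + 2 → 1 ≤ j → j ≤ m + 2 → σ i = σ j → i = j)
    (hξ : ∀ i, 1 ≤ i → i ≤ m + 2 → ξ i ≠ 0) (s : ℂ) (a : ℕ → ℂ)
    (eq0 : ξ (m + 1) * (σ (m + 2) - s) * a m = 0)
    (eqt : ∀ t, t ≤ m → ξ (t + 2) * (s - σ (t + 1)) * a t
        + (if 1 ≤ t then ξ t * (σ (t + 1) - s) * a (t - 1) else 0)
        + ξ (m + 1) * (s - σ (m + 2)) * a m = 0) :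
    ∀ t, t ≤ m → a t = 0 := by
  -- the last term of each eqt vanishes
  have hlast : ξ (m + 1) * (s - σ (m + 2)) * a m = 0 := by linear_combination -eq0
  have R : ∀ t, t ≤ m → (s - σ (t + 1)) *
      (ξ (t + 2) * a t - (if 1 ≤ t then ξ t * a (t - 1) else 0)) = 0 := by
    intro t ht
    have h1 := eqt t ht
    rw [hlast, add_zero] at h1
    by_cases h2 : 1 ≤ t
    · simp only [if_pos h2] at h1 ⊢; linear_combination h1
    · simp only [if_neg h2] at h1 ⊢; linear_combination h1
  -- forward chain
  have F : ∀ t, t ≤ m → (∀ i, i ≤ t → s ≠ σ (i + 1)) → a t = 0 := by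
    intro t
    induction t with
    | zero =>
      intro _ hne
      have h0 := R 0 (Nat.zero_le m)
      simp only [show ¬(1 ≤ 0) by omega, if_false, sub_zero] at h0
      rcases mul_eq_zero.mp h0 with h | h
      · exact absurd (by linear_combination h) (hne 0 le_rfl)
      · rcases mul_eq_zero.mp h with h' | h'
        · exact absurd h' (hξ 2 (by omega) (by omega))
        · exact h'
    | succ n ih =>
      intro hn1 hne
      have han : a n = 0 := ih (by omega) (fun i hi => hne i (by omega))
      have h0 := R (n + 1) hn1
      rw [if_pos (by omega : 1 ≤ n + 1)] at h0
      simp only [Nat.add_sub_cancel] at h0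
      rw [han, mul_zero, sub_zero] at h0
      rcases mul_eq_zero.mp h0 with h | h
      · exact absurd (by linear_combination h) (hne (n + 1) le_rfl)
      · rcases mul_eq_zero.mp h with h' | h'
        · exact absurd h' (hξ (n + 3) (by omega) (by omega))
        · exact h'
  -- backward chain, assuming s ≠ σ (m+2)
  have B : s ≠ σ (m + 2) → ∀ k, k ≤ m →
      (∀ i, m - k < i → i ≤ m → s ≠ σ (i + 1)) → a (m - k) = 0 := by
    intro hs k
    induction k with
    | zero =>
      intro _ _
      have := eq0
      rcases mul_eq_zero.mp this with h | h
      · rcases mul_eq_zero.mp h with h' | h'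
        · exact absurd h' (hξ (m + 1) (by omega) (by omega))
        · exact absurd (by linear_combination -h') hs
      · simpa using h
    | succ n ih =>
      intro hk hne
      have hprev : a (m - n) = 0 := ih (by omega) (fun i h1 h2 => hne i (by omega) h2)
      set t := m - (n + 1) with htdef
      have hmn : m - n = t + 1 := by omega
      rw [hmn] at hprev
      have h0 := R (t + 1) (by omega)
      rw [if_pos (by omega : 1 ≤ t + 1)] at h0
      simp only [Nat.add_sub_cancel] at h0
      rw [hprev, mul_zero, zero_sub, mul_neg, neg_eq_zero] at h0
      rcases mul_eq_zero.mp h0 with h | h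
      · exact absurd (by linear_combination h) (hne (t + 1) (by omega) (by omega))
      · rcases mul_eq_zero.mp h with h' | h'
        · exact absurd h' (hξ (t + 1) (by omega) (by omega))
        · exact h'
  intro t ht
  by_cases hex : ∃ i, i ≤ m ∧ s = σ (i + 1)
  · obtain ⟨t0, ht0, hs0⟩ := hex
    have huniq : ∀ i, i ≤ m → s = σ (i + 1) → i = t0 := by
      intro i hi he
      have := hσ (i + 1) (t0 + 1) (by omega) (by omega) (by omega) (by omega)
        (by rw [← he, ← hs0])
      omega
    by_cases hlt : t < t0
    · exact F t ht (fun i hi he => by have := huniq i (by omega) he; omega)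
    · have hs : s ≠ σ (m + 2) := by
        intro h
        have := hσ (t0 + 1) (m + 2) (by omega) (by omega) (by omega) (by omega)
          (by rw [← hs0, h])
        omega
      have := B hs (m - t) (by omega)
        (fun i h1 h2 he => by have := huniq i h2 he; omega)
      rwa [show m - (m - t) = t by omega] at this
  · push_neg at hex
    exact F t ht (fun i hi => hex i (by omega))

/-- The last `d−1` rows of the reduced barycentric linearization (the dual linear
basis of `[1, φ_1, …, φ_{d−1}]`) form a matrix of full row rank `d−1` for every
`s ∈ ℂ` (support points `σ_1,…,σ_d` distinct, weights `ξ_1,…,ξ_d` nonzero;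
1-based indexing). -/
theorem reduced_barycentric_full_rank (d : ℕ) (hd : 2 ≤ d) (σ ξ : ℕ → ℂ)
    (hσ : ∀ i j, 1 ≤ i → i ≤ d → 1 ≤ j → j ≤ d → σ i = σ j → i = j)
    (hξ : ∀ i, 1 ≤ i → i ≤ d → ξ i ≠ 0) (s : ℂ) :
    let M : Matrix (Fin (d - 1)) (Fin d) ℂ := Matrix.of fun k j =>
      if (k : ℕ) + 1 ≤ d - 2 then
        (if (j : ℕ) + 1 = (k : ℕ) + 2 then ξ ((k : ℕ) + 2) * (s - σ ((k : ℕ) + 1))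
         else if (j : ℕ) + 1 = (k : ℕ) + 3 then ξ ((k : ℕ) + 1) * (σ ((k : ℕ) + 2) - s)
         else 0)
      else
        (if (j : ℕ) = 0 then ξ (d - 1) * (σ d - s)
         else if (j : ℕ) + 1 = d then
           ξ (d - 1) * (s - σ d) + ξ d * (s - σ (d - 1))
         else ξ (d - 1) * (s - σ d))
    M.rank = d - 1 := by
  obtain ⟨m, rfl⟩ : ∃ m, d = m + 2 := ⟨d - 2, by omega⟩
  intro M
  have hinj : Function.Injective (Mᵀ.mulVecLin) := by
    rw [← LinearMap.ker_eq_bot, LinearMap.ker_eq_bot']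
    intro c hc
    have h : ∀ j : Fin (m + 2), ∑ k : Fin (m + 2 - 1), M k j * c k = 0 := by
      intro j
      have := congrFun hc j
      simpa [Matrix.mulVecLin_apply, Matrix.mulVec, Matrix.vecMul, dotProduct, Matrix.transpose_apply,
        mul_comm] using this
    have ha : ∀ k : Fin (m + 2 - 1),
        (fun i : ℕ => if h : i < m + 1 then c ⟨i, h⟩ else 0) (k : ℕ) = c k := by
      intro k
      exact dif_pos k.isLt
    set a : ℕ → ℂ := fun i : ℕ => if h : i < m + 1 then c ⟨i, h⟩ else 0 with hadef
    have h' : ∀ j : ℕ, j < m + 2 → ∑ k ∈ Finset.range (m + 1),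
        ((if k + 1 ≤ m then
          (if j + 1 = k + 2 then ξ (k + 2) * (s - σ (k + 1))
           else if j + 1 = k + 3 then ξ (k + 1) * (σ (k + 2) - s)
           else 0)
        else
          (if j = 0 then ξ (m + 1) * (σ (m + 2) - s)
           else if j + 1 = m + 2 then
             ξ (m + 1) * (s - σ (m + 2)) + ξ (m + 2) * (s - σ (m + 1))
           else ξ (m + 1) * (s - σ (m + 2)))) * a k) = 0 := by
      intro j hj
      have e : ∀ k : Fin (m + 2 - 1), M k ⟨j, hj⟩ * c k =
          (fun k : ℕ =>
            ((if k + 1 ≤ m then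
              (if j + 1 = k + 2 then ξ (k + 2) * (s - σ (k + 1))
               else if j + 1 = k + 3 then ξ (k + 1) * (σ (k + 2) - s)
               else 0)
            else
              (if j = 0 then ξ (m + 1) * (σ (m + 2) - s)
               else if j + 1 = m + 2 then
                 ξ (m + 1) * (s - σ (m + 2)) + ξ (m + 2) * (s - σ (m + 1))
               else ξ (m + 1) * (s - σ (m + 2)))) * a k)) (k : ℕ) := by
        intro k
        rw [← ha k]
        rfl
      calc ∑ k ∈ Finset.range (m + 1),
            ((if k + 1 ≤ m then
              (if j + 1 = k + 2 then ξ (k + 2) * (s - σ (k + 1))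
               else if j + 1 = k + 3 then ξ (k + 1) * (σ (k + 2) - s)
               else 0)
            else
              (if j = 0 then ξ (m + 1) * (σ (m + 2) - s)
               else if j + 1 = m + 2 then
                 ξ (m + 1) * (s - σ (m + 2)) + ξ (m + 2) * (s - σ (m + 1))
               else ξ (m + 1) * (s - σ (m + 2)))) * a k)
          = ∑ k : Fin (m + 2 - 1), M k ⟨j, hj⟩ * c k := by
            rw [← Fin.sum_univ_eq_sum_range]
            exact Finset.sum_congr rfl (fun k _ => (e k).symm)
        _ = 0 := h ⟨j, hj⟩
    have eq0 : ξ (m + 1) * (σ (m + 2) - s) * a m = 0 := by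
      have h0 := h' 0 (by omega)
      have hcong : ∑ k ∈ Finset.range (m + 1),
          (if k = m then ξ (m + 1) * (σ (m + 2) - s) * a k else 0)
          = ∑ k ∈ Finset.range (m + 1),
          ((if k + 1 ≤ m then
            (if 0 + 1 = k + 2 then ξ (k + 2) * (s - σ (k + 1))
             else if 0 + 1 = k + 3 then ξ (k + 1) * (σ (k + 2) - s)
             else 0)
          else
            (if (0:ℕ) = 0 then ξ (m + 1) * (σ (m + 2) - s)
             else if 0 + 1 = m + 2 then
               ξ (m + 1) * (s - σ (m + 2)) + ξ (m + 2) * (s - σ (m + 1))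
             else ξ (m + 1) * (s - σ (m + 2)))) * a k) := by
        refine Finset.sum_congr rfl fun k hk => ?_
        have hk' := Finset.mem_range.mp hk
        by_cases h1 : k + 1 ≤ m
        · rw [if_pos h1, if_neg (by omega : ¬ k = m), if_neg (by omega : ¬ (0:ℕ) + 1 = k + 2),
            if_neg (by omega : ¬ (0:ℕ) + 1 = k + 3), zero_mul]
        · rw [if_neg h1, if_pos (by omega : k = m), if_pos (rfl : (0:ℕ) = 0)]
      have h0' := hcong.trans h0
      rw [Finset.sum_ite_eq' (Finset.range (m + 1)) m
          (fun k => ξ (m + 1) * (σ (m + 2) - s) * a k),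
        if_pos (Finset.mem_range.mpr (by omega))] at h0'
      exact h0'
    have eqt : ∀ t, t ≤ m → ξ (t + 2) * (s - σ (t + 1)) * a t
        + (if 1 ≤ t then ξ t * (σ (t + 1) - s) * a (t - 1) else 0)
        + ξ (m + 1) * (s - σ (m + 2)) * a m = 0 := by
      intro t ht
      have h0 := h' (t + 1) (by omega)
      have hcong : ∑ k ∈ Finset.range (m + 1),
          ((if k = t then (if t < m then ξ (t + 2) * (s - σ (t + 1)) * a k else 0) else 0)
          + (if k = t - 1 then (if 1 ≤ t then ξ t * (σ (t + 1) - s) * a k else 0) else 0)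
          + (if k = m then (if t = m then
              (ξ (m + 1) * (s - σ (m + 2)) + ξ (m + 2) * (s - σ (m + 1))) * a k
             else ξ (m + 1) * (s - σ (m + 2)) * a k) else 0))
          = ∑ k ∈ Finset.range (m + 1),
          ((if k + 1 ≤ m then
            (if t + 1 + 1 = k + 2 then ξ (k + 2) * (s - σ (k + 1))
             else if t + 1 + 1 = k + 3 then ξ (k + 1) * (σ (k + 2) - s)
             else 0)
          else
            (if t + 1 = 0 then ξ (m + 1) * (σ (m + 2) - s)
             else if t + 1 + 1 = m + 2 then
               ξ (m + 1) * (s - σ (m + 2)) + ξ (m + 2) * (s - σ (m + 1))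
             else ξ (m + 1) * (s - σ (m + 2)))) * a k) := by
        refine Finset.sum_congr rfl fun k hk => ?_
        have hk' := Finset.mem_range.mp hk
        by_cases h1 : k + 1 ≤ m
        · rw [if_pos h1, if_neg (by omega : ¬ k = m), add_zero]
          by_cases h2 : k = t
          · subst h2
            rw [if_pos (rfl : k = k), if_pos (by omega : k + 1 + 1 = k + 2),
              if_pos (by omega : k < m)]
            by_cases h3 : k = k - 1
            · rw [if_pos h3, if_neg (by omega : ¬ 1 ≤ k), add_zero]
            · rw [if_neg h3, add_zero]
          · rw [if_neg h2, if_neg (by omega : ¬ t + 1 + 1 = k + 2), zero_add]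
            by_cases h3 : t + 1 + 1 = k + 3
            · rw [if_pos h3, if_pos (by omega : k = t - 1), if_pos (by omega : 1 ≤ t),
                show t = k + 1 by omega]
            · rw [if_neg h3, zero_mul]
              by_cases h3a : k = t - 1
              · rw [if_pos h3a, if_neg (by omega : ¬ 1 ≤ t)]
              · rw [if_neg h3a]
        · rw [if_neg h1, if_neg (by omega : ¬ t + 1 = 0)]
          have hz1 : (if k = t then (if t < m then ξ (t + 2) * (s - σ (t + 1)) * a k else 0)
              else 0) = 0 := by
            by_cases h2 : k = t
            · rw [if_pos h2, if_neg (by omega : ¬ t < m)]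
            · rw [if_neg h2]
          have hz2 : (if k = t - 1 then (if 1 ≤ t then ξ t * (σ (t + 1) - s) * a k else 0)
              else 0) = 0 := by
            by_cases h2 : k = t - 1
            · rw [if_pos h2, if_neg (by omega : ¬ 1 ≤ t)]
            · rw [if_neg h2]
          rw [hz1, hz2, zero_add, zero_add, if_pos (by omega : k = m)]
          by_cases h2 : t = m
          · rw [if_pos h2, if_pos (by omega : t + 1 + 1 = m + 2)]
          · rw [if_neg h2, if_neg (by omega : ¬ t + 1 + 1 = m + 2)]
      have h0' := hcong.trans h0
      rw [Finset.sum_add_distrib, Finset.sum_add_distrib,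
        Finset.sum_ite_eq' (Finset.range (m + 1)) t
          (fun k => if t < m then ξ (t + 2) * (s - σ (t + 1)) * a k else 0),
        Finset.sum_ite_eq' (Finset.range (m + 1)) (t - 1)
          (fun k => if 1 ≤ t then ξ t * (σ (t + 1) - s) * a k else 0),
        Finset.sum_ite_eq' (Finset.range (m + 1)) m
          (fun k => if t = m then
              (ξ (m + 1) * (s - σ (m + 2)) + ξ (m + 2) * (s - σ (m + 1))) * a k
             else ξ (m + 1) * (s - σ (m + 2)) * a k),
        if_pos (Finset.mem_range.mpr (by omega : t < m + 1)),
        if_pos (Finset.mem_range.mpr (by omega : t - 1 < m + 1)),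
        if_pos (Finset.mem_range.mpr (by omega : m < m + 1))] at h0'
      by_cases h2 : t = m
      · rw [if_neg (by omega : ¬ t < m), if_pos h2] at h0'
        subst h2
        by_cases h3 : 1 ≤ t
        · rw [if_pos h3] at h0' ⊢; linear_combination h0'
        · rw [if_neg h3] at h0' ⊢; linear_combination h0'
      · rw [if_pos (by omega : t < m), if_neg h2] at h0'
        by_cases h3 : 1 ≤ t
        · rw [if_pos h3] at h0' ⊢; linear_combination h0'
        · rw [if_neg h3] at h0' ⊢; linear_combination h0'
    have hker := rb_aux_key m σ ξ hσ hξ s a eq0 eqt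
    funext k
    show c k = 0
    rw [← ha k]
    exact hker (k : ℕ) (by have := k.isLt; omega)
  rw [← Matrix.rank_transpose, Matrix.rank, LinearMap.finrank_range_of_inj hinj]
  simp
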